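/- For every integer i ≥ 1 there exists a finite partially ordered set (V, ≤) with exactly 2^{i+1} elements whose maximum chain has size 2 (height β_1 = 2), together with a greedy antichain sequence A_1, …, A_{i+2} of pairwise disjoint antichains that partitions V into exactly i + 2 antichains; in particular, the number of antichains used by this greedy partition equals log_2(|V|) + 1, a Θ(log |V|) factor more than the optimal antichain partition into β_1 = 2 antichains. -/

import Mathlib

/-- A greedy antichain sequence: pairwise disjoint antichains `A 0, …, A (m-1)` such that
each `A i` has maximum cardinality among all antichains contained in the complement of
the previously chosen antichains. -/
def GreedyAntichainSeq (V : Type) [DecidableEq V] [PartialOrder V]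
    {m : ℕ} (A : Fin m → Finset V) : Prop :=
  (∀ i, IsAntichain (· ≤ ·) ((A i : Finset V) : Set V)) ∧
  (∀ i j, i ≠ j → Disjoint (A i) (A j)) ∧
  (∀ (i : Fin m) (B : Finset V), IsAntichain (· ≤ ·) ((B : Finset V) : Set V) →
    (∀ v ∈ B, ∀ j, j < i → v ∉ A j) → B.card ≤ (A i).card)

/-- The height `β_1`: the maximum cardinality of a chain. -/
noncomputable def heightVal (V : Type) [Fintype V] [DecidableEq V] [PartialOrder V] : ℕ :=
  sSup {n : ℕ | ∃ C : Finset V,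
    IsChain (· ≤ ·) ((C : Finset V) : Set V) ∧ n = C.card}

def GreedyAntichainPartitionLowerBound (V : Type) [Fintype V] [DecidableEq V]
    [PartialOrder V] (i : ℕ) : Prop :=
  Fintype.card V = 2 ^ (i + 1) ∧
  heightVal V = 2 ∧
  ∃ A : Fin (i + 2) → Finset V, GreedyAntichainSeq V A ∧
    (∀ j, (A j).Nonempty) ∧
    Finset.univ.biUnion A = Finset.univ ∧
    ((i : ℝ) + 2 = Real.logb 2 (Fintype.card V) + 1)

/-!
Take bottoms and tops carrying values in `[0, 2 ^ k)`, bottom `c` lying below top `m` iff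
`c + m + 1` is a power of two; this poset has height `2`. The elements with value below `2 ^ e`
are covered by the `2 ^ e` chains `{bottom (2 ^ e - 1 - m), top m}`, so no antichain among them
has more than `2 ^ e` elements. On the other hand two values of the same positive bit length `s`
sum to strictly between `2 ^ s` and `2 ^ (s + 1) - 1`, so the elements whose value has bit length
`k, k - 1, …, 1` form antichains of sizes `2 ^ k, 2 ^ (k - 1), …, 2`, followed by the bottom `0`
and the top `0`. Each of these `k + 2` layers is as large as any antichain in what remains, so
greedy may pick them in this order.
-/

open Finset

section Greedy

variable {V : Type} [Fintype V] [DecidableEq V] [PartialOrder V]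

theorem heightVal_eq_of_forall_card_le {n : ℕ}
    (hex : ∃ C : Finset V, IsChain (· ≤ ·) (C : Set V) ∧ #C = n)
    (hle : ∀ C : Finset V, IsChain (· ≤ ·) (C : Set V) → #C ≤ n) : heightVal V = n := by
  obtain ⟨C, hC, rfl⟩ := hex
  exact IsGreatest.csSup_eq ⟨⟨C, hC, rfl⟩, by rintro _ ⟨D, hD, rfl⟩; exact hle D hD⟩

theorem greedyAntichainSeq_fibers {m : ℕ} (f : V → Fin m)
    (hanti : ∀ i, IsAntichain (· ≤ ·) {v | f v = i})
    (hmax : ∀ i (B : Finset V), IsAntichain (· ≤ ·) (B : Set V) → (∀ v ∈ B, i ≤ f v) →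
      #B ≤ #{v | f v = i}) :
    GreedyAntichainSeq V fun i ↦ {v | f v = i} := by
  refine ⟨fun i ↦ ?_, fun i j hij ↦ disjoint_filter.2 fun v _ hi hj ↦ hij (hi ▸ hj), ?_⟩
  · simpa only [coe_filter, mem_univ, true_and] using hanti i
  · refine fun i B hB hout ↦ hmax i B hB fun v hv ↦ not_lt.1 fun hlt ↦ ?_
    exact hout v hv (f v) hlt (by simp)

end Greedy

theorem card_fiber_eq_of_le_of_sum_le {α ι : Type*} [Fintype α] [Fintype ι] [DecidableEq ι]
    (f : α → ι) (b : ι → ℕ) (hle : ∀ i, #{a | f a = i} ≤ b i)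
    (hsum : ∑ i, b i ≤ Fintype.card α) (i : ι) : #{a | f a = i} = b i := by
  have htotal : Fintype.card α = ∑ i, #{a | f a = i} :=
    card_eq_sum_card_fiberwise fun a _ ↦ mem_univ (f a)
  have hsum_eq : ∑ i, #{a | f a = i} = ∑ i, b i :=
    le_antisymm (sum_le_sum fun i _ ↦ hle i) (hsum.trans htotal.le)
  exact (sum_eq_sum_iff_of_le fun i _ ↦ hle i).1 hsum_eq i (mem_univ i)

theorem Nat.size_ne_of_add_add_one_eq_two_pow {a b e : ℕ} (hb : b ≠ 0)
    (h : a + b + 1 = 2 ^ e) : a.size ≠ b.size := by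
  intro hab
  set s := b.size
  have hs : s - 1 < s := Nat.sub_lt (Nat.size_pos.2 (Nat.pos_of_ne_zero hb)) one_pos
  have ha1 : 2 ^ (s - 1) ≤ a := Nat.lt_size.1 (hab ▸ hs)
  have hb1 : 2 ^ (s - 1) ≤ b := Nat.lt_size.1 hs
  have ha2 : a < 2 ^ s := Nat.size_le.1 hab.le
  have hb2 : b < 2 ^ s := Nat.size_le.1 le_rfl
  have hpow : 2 ^ s = 2 * 2 ^ (s - 1) := by rw [← pow_succ']; congr 1; omega
  have h1 : s < e := (Nat.pow_lt_pow_iff_right (a := 2) (by norm_num)).1 (by omega)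
  have h2 : e < s + 1 :=
    (Nat.pow_lt_pow_iff_right (a := 2) (by norm_num)).1 (by rw [pow_succ]; omega)
  omega

-- The last summand is `2 ^ (k - (k + 1)) = 2 ^ 0` (truncated subtraction).
theorem sum_fin_two_pow_sub (k : ℕ) : ∑ t : Fin (k + 2), 2 ^ (k - t) = 2 ^ (k + 1) := by
  induction k with
  | zero => rfl
  | succ k ih =>
    rw [Fin.sum_univ_succ]
    simp only [Fin.val_zero, Nat.sub_zero, Fin.val_succ, Nat.add_sub_add_right, ih]
    ring

structure TwoLayer (k : ℕ) where
  top : Bool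
  val : Fin (2 ^ k)
deriving DecidableEq, Fintype

namespace TwoLayer

variable {k : ℕ}

instance : PartialOrder (TwoLayer k) where
  le x y := x = y ∨ (x.top = false ∧ y.top = true ∧ ∃ e, (x.val : ℕ) + y.val + 1 = 2 ^ e)
  le_refl x := Or.inl rfl
  le_trans x y z := by
    rintro (rfl | ⟨hx, hy, hxy⟩) hyz
    · exact hyz
    rcases hyz with rfl | ⟨hy', -, -⟩
    exacts [Or.inr ⟨hx, hy, hxy⟩, absurd (hy ▸ hy') (by simp)]
  le_antisymm x y := by
    rintro (rfl | ⟨-, hy, -⟩) (h | ⟨hy', -, -⟩)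
    exacts [rfl, rfl, h.symm, absurd (hy ▸ hy') (by simp)]

theorem le_iff {x y : TwoLayer k} :
    x ≤ y ↔ x = y ∨ (x.top = false ∧ y.top = true ∧ ∃ e, (x.val : ℕ) + y.val + 1 = 2 ^ e) :=
  Iff.rfl

theorem eq_of_le_of_top_eq {x y : TwoLayer k} (h : x ≤ y) (htop : x.top = y.top) : x = y := by
  rcases le_iff.1 h with h | ⟨hx, hy, -⟩
  · exact h
  · simp [hx, hy] at htop

theorem _root_.Fintype.card_twoLayer : Fintype.card (TwoLayer k) = 2 ^ (k + 1) := by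
  rw [Fintype.card_congr (⟨fun x ↦ (x.top, x.val), fun p ↦ ⟨p.1, p.2⟩, fun _ ↦ rfl, fun _ ↦ rfl⟩ :
    TwoLayer k ≃ Bool × Fin (2 ^ k))]
  simp [pow_succ, mul_comm]

theorem card_le_two_of_isChain {C : Finset (TwoLayer k)}
    (hC : IsChain (· ≤ ·) (C : Set (TwoLayer k))) : #C ≤ 2 := by
  refine card_le_card_of_injOn top (fun _ _ ↦ mem_coe.2 (mem_univ _)) fun x hx y hy htop ↦ ?_
  by_contra hne
  rcases hC hx hy hne with h | h
  exacts [hne (eq_of_le_of_top_eq h htop), hne (eq_of_le_of_top_eq h htop.symm).symm]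

theorem heightVal_eq_two : heightVal (TwoLayer k) = 2 := by
  let zero : Fin (2 ^ k) := ⟨0, Nat.two_pow_pos k⟩
  refine heightVal_eq_of_forall_card_le ⟨{mk false zero, mk true zero}, ?_, rfl⟩
    fun C hC ↦ card_le_two_of_isChain hC
  rw [coe_pair]
  exact IsChain.pair (le_iff.2 (.inr ⟨rfl, rfl, 0, rfl⟩))

/-- Among the elements with value below `2 ^ e`, the index `m` of the chain
`{mk false ⟨2 ^ e - 1 - m, _⟩, mk true ⟨m, _⟩}` containing `x`. -/
def slot (e : ℕ) (x : TwoLayer k) : ℕ := if x.top then x.val else 2 ^ e - 1 - x.val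

theorem le_total_of_slot_eq {e : ℕ} {x y : TwoLayer k} (hx : (x.val : ℕ) < 2 ^ e)
    (hy : (y.val : ℕ) < 2 ^ e) (h : slot e x = slot e y) : x ≤ y ∨ y ≤ x := by
  obtain ⟨tx, ⟨a, ha⟩⟩ := x
  obtain ⟨ty, ⟨b, hb⟩⟩ := y
  simp only [slot] at h hx hy
  cases tx <;> cases ty <;> simp only [Bool.false_eq_true, if_false, if_true] at h
  · exact .inl (.inl (by simp only [mk.injEq, Fin.mk.injEq, true_and]; omega))
  · exact .inl (.inr ⟨rfl, rfl, e, show a + b + 1 = 2 ^ e by omega⟩)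
  · exact .inr (.inr ⟨rfl, rfl, e, show b + a + 1 = 2 ^ e by omega⟩)
  · exact .inl (.inl (by simp only [mk.injEq, Fin.mk.injEq, true_and]; omega))

theorem card_le_of_isAntichain {B : Finset (TwoLayer k)}
    (hB : IsAntichain (· ≤ ·) (B : Set (TwoLayer k))) {e : ℕ}
    (hval : ∀ x ∈ B, (x.val : ℕ) < 2 ^ e) : #B ≤ 2 ^ e := by
  refine (card_le_card_of_injOn (slot e) (fun x hx ↦ ?_) fun x hx y hy h ↦ ?_).trans_eq
    (card_range _)
  · have := hval x hx
    simp only [coe_range, Set.mem_Iio, slot]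
    split <;> omega
  · rcases le_total_of_slot_eq (hval x hx) (hval y hy) h with h | h
    exacts [hB.eq hx hy h, (hB.eq hy hx h).symm]

/-- The index of the greedy antichain containing `x`: the elements whose value has bit length
`s` form antichain `k - s`, except that the top `0` is left over for the last one. -/
def level (x : TwoLayer k) : Fin (k + 2) :=
  if x.top ∧ x.val = 0 then Fin.last (k + 1)
  else ⟨k - (x.val : ℕ).size, by omega⟩

theorem val_lt_of_le_level {x : TwoLayer k} {t : ℕ} (h : t ≤ level x) :
    (x.val : ℕ) < 2 ^ (k - t) := by
  unfold level at h
  split_ifs at h with h0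
  · simp [h0.2]
  · have := Nat.size_le.2 x.val.isLt
    exact Nat.size_le.1 (by simp only at h; omega)

theorem val_level_of_ne {x : TwoLayer k} (h : x.top = false ∨ (x.val : ℕ) ≠ 0) :
    (level x : ℕ) = k - (x.val : ℕ).size := by
  rw [level, if_neg (by rintro ⟨ht, hv⟩; simp_all)]

theorem isAntichain_level (t : Fin (k + 2)) : IsAntichain (· ≤ ·) {x | level x = t} := by
  rintro x (hx : level x = t) y (hy : level y = t) hne (h | ⟨hxb, hyt, e, he⟩)
  · exact hne h
  have hxy : (level x : ℕ) = level y := congrArg Fin.val (hx.trans hy.symm)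
  have hsx := Nat.size_le.2 x.val.isLt
  have hsy := Nat.size_le.2 y.val.isLt
  rw [val_level_of_ne (.inl hxb)] at hxy
  by_cases hy0 : (y.val : ℕ) = 0
  · rw [level, if_pos ⟨hyt, Fin.ext hy0⟩, Fin.val_last] at hxy
    omega
  · rw [val_level_of_ne (.inr hy0)] at hxy
    exact Nat.size_ne_of_add_add_one_eq_two_pow hy0 he (by omega)

theorem card_level_fiber (t : Fin (k + 2)) : #{x | level x = t} = 2 ^ (k - t) := by
  refine card_fiber_eq_of_le_of_sum_le level (fun t ↦ 2 ^ (k - t)) (fun t ↦ ?_)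
    (by rw [sum_fin_two_pow_sub, Fintype.card_twoLayer]) t
  refine card_le_of_isAntichain ?_ fun x hx ↦ val_lt_of_le_level (mem_filter.1 hx).2.ge
  simpa only [coe_filter, mem_univ, true_and] using isAntichain_level t

end TwoLayer

theorem greedy_antichain_partition_log_lower_bound_general (i : ℕ) :
    ∃ (V : Type) (f : Fintype V) (d : DecidableEq V) (p : PartialOrder V),
      @GreedyAntichainPartitionLowerBound V f d p i := by
  open TwoLayer in
  refine ⟨TwoLayer i, inferInstance, inferInstance, inferInstance, Fintype.card_twoLayer,
    heightVal_eq_two, fun t ↦ {x | level x = t},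
    greedyAntichainSeq_fibers level isAntichain_level ?_, fun t ↦ card_pos.1 ?_,
    biUnion_filter_eq_of_maps_to fun x _ ↦ mem_univ _, ?_⟩
  · intro t B hB hlevel
    rw [card_level_fiber]
    exact card_le_of_isAntichain hB fun x hx ↦ val_lt_of_le_level (hlevel x hx)
  · rw [card_level_fiber]
    exact Nat.two_pow_pos _
  · rw [Fintype.card_twoLayer, Nat.cast_pow, Nat.cast_ofNat, Real.logb_pow,
      Real.logb_self_eq_one one_lt_two]
    push_cast
    ring

/-- For every `i ≥ 1` there is a finite poset with exactly `2^(i+1)` elements, of height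
`2`, admitting a greedy antichain sequence that partitions it into exactly `i + 2`
antichains; in particular the number of greedy antichains equals `log₂ |V| + 1`, a
`Θ(log |V|)` factor more than the optimal antichain partition into `2` antichains. -/
theorem greedy_antichain_partition_log_lower_bound (i : ℕ) (hi : 1 ≤ i) :
    ∃ (V : Type) (f : Fintype V) (d : DecidableEq V) (p : PartialOrder V),
      @GreedyAntichainPartitionLowerBound V f d p i :=
  greedy_antichain_partition_log_lower_bound_general i
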